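/- arXiv:1410.1176 — 2 statements merged into one kernel-verified Lean document; each statement's English description precedes it below -/
import Mathlib

section
/- Let N ≥ 2, 0 < κ ≤ 1/4, set α₊ = 1 + √(1 − 4κ), and let j ∈ {1, …, N−1}. The function u(x) = x_N^{α₊/2}·x_j·|x|^{−(N + α₊)} satisfies −Δu(x) − κ·u(x)/x_N² = 0 at every point x of the open half-space ℝ^N_+. -/
/-!
Write `u = x_N ^ a * g` with `a = α₊ / 2` and `g x = x_j * ‖x‖ ^ p`, `p = -(N + α₊)`. By the
product rule `Δu = (Δ x_N ^ a) g + 2 ∂_N (x_N ^ a) ∂_N g + x_N ^ a Δg`. Here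
`Δ x_N ^ a = a (a - 1) x_N ^ (a - 2) = -κ x_N ^ (a - 2)`, since `a` is a root of `a² - a + κ`;
and, as `j ≠ N`, `∂_N g = p x_j x_N ‖x‖ ^ (p - 2)` while `Δg = p (p + N) x_j ‖x‖ ^ (p - 2)`.
The last two contributions add up to `p (2a + p + N) x_N ^ a x_j ‖x‖ ^ (p - 2)`, which vanishes
because `p = -(N + 2a)`.
-/

open MeasureTheory

/-- The Laplacian of `f` at `x`: the sum of the (pure) second partial derivatives. -/
noncomputable def laplacian {N : ℕ} (f : EuclideanSpace ℝ (Fin N) → ℝ)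
    (x : EuclideanSpace ℝ (Fin N)) : ℝ :=
  ∑ i : Fin N,
    iteratedFDeriv ℝ 2 f x ![EuclideanSpace.single i 1, EuclideanSpace.single i 1]

open Filter Topology

section SecondDerivative

variable {𝕜 E F : Type*} [NontriviallyNormedField 𝕜] [NormedAddCommGroup E] [NormedSpace 𝕜 E]
  [NormedAddCommGroup F] [NormedSpace 𝕜 F] {f : E → F} {x : E}

theorem ContDiffAt.differentiableAt_fderiv (hf : ContDiffAt 𝕜 2 f x) :
    DifferentiableAt 𝕜 (fderiv 𝕜 f) x :=
  (hf.fderiv_right (m := 1) le_rfl).differentiableAt one_ne_zero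

theorem ContDiffAt.differentiableAt_fderiv_apply (hf : ContDiffAt 𝕜 2 f x) (w : E) :
    DifferentiableAt 𝕜 (fun y => fderiv 𝕜 f y w) x :=
  hf.differentiableAt_fderiv.clm_apply (differentiableAt_const w)

theorem ContDiffAt.iteratedFDeriv_two_apply_eq_fderiv_apply (hf : ContDiffAt 𝕜 2 f x) (v w : E) :
    iteratedFDeriv 𝕜 2 f x ![v, w] = fderiv 𝕜 (fun y => fderiv 𝕜 f y w) x v := by
  rw [_root_.iteratedFDeriv_two_apply,
    fderiv_clm_apply hf.differentiableAt_fderiv (differentiableAt_const w)]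
  simp

theorem ContDiffAt.iteratedFDeriv_two_apply_of_hasFDerivAt {g : E → F} {g' : E →L[𝕜] F}
    {v w : E} (hf : ContDiffAt 𝕜 2 f x) (hfg : (fun y => fderiv 𝕜 f y w) =ᶠ[𝓝 x] g)
    (hg : HasFDerivAt g g' x) :
    iteratedFDeriv 𝕜 2 f x ![v, w] = g' v := by
  rw [hf.iteratedFDeriv_two_apply_eq_fderiv_apply, hfg.fderiv_eq, hg.fderiv]

theorem ContDiffAt.iteratedFDeriv_two_mul_apply {f g : E → 𝕜} (hf : ContDiffAt 𝕜 2 f x)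
    (hg : ContDiffAt 𝕜 2 g x) (v : E) :
    iteratedFDeriv 𝕜 2 (fun y => f y * g y) x ![v, v] =
      iteratedFDeriv 𝕜 2 f x ![v, v] * g x + 2 * (fderiv 𝕜 f x v * fderiv 𝕜 g x v)
        + f x * iteratedFDeriv 𝕜 2 g x ![v, v] := by
  have hfg : ∀ᶠ y in 𝓝 x, fderiv 𝕜 (fun y => f y * g y) y v =
      f y * fderiv 𝕜 g y v + g y * fderiv 𝕜 f y v := by
    filter_upwards [hf.eventually (by simp), hg.eventually (by simp)] with y hfy hgy
    simp [fderiv_fun_mul (hfy.differentiableAt two_ne_zero) (hgy.differentiableAt two_ne_zero)]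
  have hd := ((hf.differentiableAt two_ne_zero).hasFDerivAt.mul
      (hg.differentiableAt_fderiv_apply v).hasFDerivAt).add
    ((hg.differentiableAt two_ne_zero).hasFDerivAt.mul
      (hf.differentiableAt_fderiv_apply v).hasFDerivAt)
  rw [(hf.mul hg).iteratedFDeriv_two_apply_of_hasFDerivAt hfg hd,
    hf.iteratedFDeriv_two_apply_eq_fderiv_apply, hg.iteratedFDeriv_two_apply_eq_fderiv_apply]
  simp only [add_apply, smul_apply, smul_eq_mul]
  ring

end SecondDerivative

section NormRpow

variable {E : Type*} [NormedAddCommGroup E] [InnerProductSpace ℝ E] {x : E}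

theorem hasFDerivAt_norm_rpow_of_ne_zero (hx : x ≠ 0) (p : ℝ) :
    HasFDerivAt (fun y : E => ‖y‖ ^ p) ((p * ‖x‖ ^ (p - 2)) • innerSL ℝ x) x := by
  have hpow : ∀ (y : E) (q : ℝ), (‖y‖ ^ 2) ^ (q / 2) = ‖y‖ ^ q := fun y q => by
    rw [← Real.rpow_natCast, ← Real.rpow_mul (norm_nonneg y)]
    ring_nf
  have h := (hasStrictFDerivAt_norm_sq x).hasFDerivAt.rpow_const (p := p / 2)
    (Or.inl (by simpa using hx))
  simp only [show p / 2 - 1 = (p - 2) / 2 by ring, hpow] at h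
  convert h using 1
  ext v
  simp only [smul_apply, smul_eq_mul, nsmul_eq_mul]
  ring

end NormRpow

section Euclidean

variable {N : ℕ} {x : EuclideanSpace ℝ (Fin N)}

theorem laplacian_mul {f g : EuclideanSpace ℝ (Fin N) → ℝ} (hf : ContDiffAt ℝ 2 f x)
    (hg : ContDiffAt ℝ 2 g x) :
    laplacian (fun y => f y * g y) x =
      laplacian f x * g x
        + 2 * ∑ i, fderiv ℝ f x (EuclideanSpace.single i 1) *
            fderiv ℝ g x (EuclideanSpace.single i 1)
        + f x * laplacian g x := by
  simp only [laplacian, hf.iteratedFDeriv_two_mul_apply hg, Finset.sum_add_distrib,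
    Finset.sum_mul, Finset.mul_sum]

theorem hasFDerivAt_coord (j : Fin N) (x : EuclideanSpace ℝ (Fin N)) :
    HasFDerivAt (fun y : EuclideanSpace ℝ (Fin N) => y j) (EuclideanSpace.proj (𝕜 := ℝ) j) x :=
  PiLp.hasFDerivAt_apply 2 x j

theorem contDiff_coord (j : Fin N) :
    ContDiff ℝ 2 (fun y : EuclideanSpace ℝ (Fin N) => y j) :=
  contDiff_piLp_apply 2

theorem fderiv_coord (j : Fin N) (v : EuclideanSpace ℝ (Fin N)) :
    fderiv ℝ (fun y : EuclideanSpace ℝ (Fin N) => y j) x v = v j := by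
  simp [(hasFDerivAt_coord j x).fderiv]

theorem laplacian_coord (j : Fin N) : laplacian (fun y => y j) x = 0 := by
  refine Finset.sum_eq_zero fun i _ => ?_
  have hfg : ∀ᶠ y in 𝓝 x, fderiv ℝ (fun y : EuclideanSpace ℝ (Fin N) => y j) y
      (EuclideanSpace.single i 1) = (EuclideanSpace.single i (1 : ℝ)) j :=
    Eventually.of_forall fun y => fderiv_coord j _
  rw [(contDiff_coord j).contDiffAt.iteratedFDeriv_two_apply_of_hasFDerivAt
    hfg (hasFDerivAt_const _ x)]
  rfl

theorem hasFDerivAt_coord_rpow (n : Fin N) (a : ℝ) (hx : x n ≠ 0) :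
    HasFDerivAt (fun y : EuclideanSpace ℝ (Fin N) => y n ^ a)
      ((a * x n ^ (a - 1)) • EuclideanSpace.proj (𝕜 := ℝ) n) x :=
  (hasFDerivAt_coord n x).rpow_const (Or.inl hx)

theorem contDiffAt_coord_rpow (n : Fin N) (a : ℝ) (hx : x n ≠ 0) :
    ContDiffAt ℝ 2 (fun y : EuclideanSpace ℝ (Fin N) => y n ^ a) x :=
  (contDiff_coord n).contDiffAt.rpow_const_of_ne hx

theorem laplacian_coord_rpow (n : Fin N) (a : ℝ) (hx : x n ≠ 0) :
    laplacian (fun y => y n ^ a) x = a * (a - 1) * x n ^ (a - 2) := by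
  have hterm : ∀ i, iteratedFDeriv ℝ 2 (fun y : EuclideanSpace ℝ (Fin N) => y n ^ a) x
      ![EuclideanSpace.single i 1, EuclideanSpace.single i 1] =
        if i = n then a * (a - 1) * x n ^ (a - 2) else 0 := by
    intro i
    have hfg : ∀ᶠ y in 𝓝 x, fderiv ℝ (fun y : EuclideanSpace ℝ (Fin N) => y n ^ a) y
        (EuclideanSpace.single i 1) = a * y n ^ (a - 1) * (EuclideanSpace.single i (1 : ℝ)) n := by
      filter_upwards [(hasFDerivAt_coord n x).continuousAt.eventually_ne hx] with y hy
      simp [(hasFDerivAt_coord_rpow n a hy).fderiv]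
    rw [(contDiffAt_coord_rpow n a hx).iteratedFDeriv_two_apply_of_hasFDerivAt hfg
      (((hasFDerivAt_coord_rpow n (a - 1) hx).const_mul a).mul_const _)]
    by_cases hi : i = n
    · subst hi
      simp
      ring_nf
    · simp [hi, Ne.symm hi]
  simp [laplacian, hterm]

theorem contDiffAt_norm_rpow (hx : x ≠ 0) (p : ℝ) :
    ContDiffAt ℝ 2 (fun y : EuclideanSpace ℝ (Fin N) => ‖y‖ ^ p) x :=
  (contDiffAt_norm ℝ hx).rpow_const_of_ne (norm_ne_zero_iff.2 hx)

theorem laplacian_norm_rpow (hx : x ≠ 0) (p : ℝ) :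
    laplacian (fun y => ‖y‖ ^ p) x = p * (p + N - 2) * ‖x‖ ^ (p - 2) := by
  have hterm : ∀ i, iteratedFDeriv ℝ 2 (fun y : EuclideanSpace ℝ (Fin N) => ‖y‖ ^ p) x
      ![EuclideanSpace.single i 1, EuclideanSpace.single i 1] =
        p * ‖x‖ ^ (p - 2) + p * (p - 2) * ‖x‖ ^ (p - 2 - 2) * x i ^ 2 := by
    intro i
    have hfg : ∀ᶠ y in 𝓝 x, fderiv ℝ (fun y : EuclideanSpace ℝ (Fin N) => ‖y‖ ^ p) y
        (EuclideanSpace.single i 1) = p * ‖y‖ ^ (p - 2) * y i := by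
      filter_upwards [eventually_ne_nhds hx] with y hy
      simp [(hasFDerivAt_norm_rpow_of_ne_zero hy p).fderiv, EuclideanSpace.inner_single_right]
    rw [(contDiffAt_norm_rpow hx p).iteratedFDeriv_two_apply_of_hasFDerivAt hfg
      (((hasFDerivAt_norm_rpow_of_ne_zero hx (p - 2)).const_mul p).mul (hasFDerivAt_coord i x))]
    simp [EuclideanSpace.inner_single_right]
    ring
  have hx' : ‖x‖ ≠ 0 := norm_ne_zero_iff.2 hx
  simp only [laplacian, hterm, Finset.sum_add_distrib, ← Finset.mul_sum,
    ← EuclideanSpace.real_norm_sq_eq, Finset.sum_const, Finset.card_univ, Fintype.card_fin,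
    nsmul_eq_mul]
  rw [show p - 2 - 2 = p - 2 - (2 : ℕ) by norm_num, Real.rpow_sub_natCast hx']
  field_simp
  ring

theorem laplacian_coord_mul_norm_rpow (j : Fin N) (hx : x ≠ 0) (p : ℝ) :
    laplacian (fun y => y j * ‖y‖ ^ p) x = p * (p + N) * x j * ‖x‖ ^ (p - 2) := by
  rw [laplacian_mul (contDiff_coord j).contDiffAt (contDiffAt_norm_rpow hx p), laplacian_coord,
    laplacian_norm_rpow hx]
  simp [fderiv_coord, (hasFDerivAt_norm_rpow_of_ne_zero hx p).fderiv,
    EuclideanSpace.inner_single_right]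
  ring

theorem laplacian_coord_rpow_mul_coord_mul_norm_rpow {n j : Fin N} (hjn : j ≠ n)
    (hx : x n ≠ 0) (a p : ℝ) :
    laplacian (fun y => y n ^ a * (y j * ‖y‖ ^ p)) x =
      a * (a - 1) * x n ^ (a - 2) * x j * ‖x‖ ^ p
        + p * (2 * a + p + N) * x n ^ a * x j * ‖x‖ ^ (p - 2) := by
  have hx0 : x ≠ 0 := fun h => hx (by simp [h])
  rw [laplacian_mul (contDiffAt_coord_rpow n a hx)
    ((contDiff_coord j).contDiffAt.mul (contDiffAt_norm_rpow hx0 p)),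
    laplacian_coord_rpow n a hx, laplacian_coord_mul_norm_rpow j hx0]
  simp [(hasFDerivAt_coord_rpow n a hx).fderiv,
    ((hasFDerivAt_coord j x).fun_mul (hasFDerivAt_norm_rpow_of_ne_zero hx0 p)).fderiv,
    EuclideanSpace.inner_single_right, hjn, Real.rpow_sub_one hx]
  field_simp
  ring

end Euclidean

/-- for every tangential coordinate `x_j` (`j = 1, …, N-1`), the function
`u(x) = x_N^{α₊/2} x_j |x|^{-(N+α₊)}` is harmonic for the Hardy operator `-Δ - κ/x_N²`
in the half-space `{x_N > 0}`. -/
theorem stmt_7 {N : ℕ} (hN : 2 ≤ N)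
    (κ α : ℝ) (hκ1 : κ ≤ 1 / 4)
    (hα : α = 1 + Real.sqrt (1 - 4 * κ))
    (j : Fin N) (hj : (j : ℕ) < N - 1) :
    ∀ x : EuclideanSpace ℝ (Fin N), 0 < x ⟨N - 1, by omega⟩ →
      -laplacian
          (fun y => (y ⟨N - 1, by omega⟩) ^ (α / 2) * y j * ‖y‖ ^ (-((N : ℝ) + α))) x
        - κ * ((x ⟨N - 1, by omega⟩) ^ (α / 2) * x j * ‖x‖ ^ (-((N : ℝ) + α)))
            / (x ⟨N - 1, by omega⟩) ^ 2 = 0 := by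
  intro x hx
  set n : Fin N := ⟨N - 1, by omega⟩
  have hjn : j ≠ n := fun h => by simp [h, n] at hj
  have hκ : α / 2 * (α / 2 - 1) = -κ := by
    have := Real.sq_sqrt (show 0 ≤ 1 - 4 * κ by linarith)
    rw [hα]
    nlinarith
  have hpow : x n ^ (α / 2 - 2) = x n ^ (α / 2) / x n ^ 2 := by
    simpa using Real.rpow_sub_natCast hx.ne' (α / 2) 2
  simp only [mul_assoc]
  rw [laplacian_coord_rpow_mul_coord_mul_norm_rpow hjn hx.ne', hpow,
    show 2 * (α / 2) + -(N + α) + N = 0 by ring]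
  linear_combination (-(x n ^ (α / 2) / x n ^ 2 * x j * ‖x‖ ^ (-(N + α)))) * hκ
end

section
/- Let N ≥ 2, 0 < κ ≤ 1/4, set α₊ = 1 + √(1 − 4κ), and let 1 < q < q_c where q_c = (N + α₊/2)/(N − 2 + α₊/2). Then there exists ε₀ > 0 such that for every 0 < ε ≤ ε₀ the function v(x) = ε·x_N^{α₊/2}·|x|^{−2/(q−1) − α₊/2} satisfies −Δv(x) − κ·v(x)/x_N² + v(x)^q ≤ 0 at every point x of the open half-space ℝ^N_+ (one may take ε₀ = (ℓ_{q,N} − μ_κ)^{1/(q−1)}). -/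
/-!
Put `a = α₊ / 2` and `β = -(2 / (q - 1) + a)`. Restricting to coordinate lines, where the
function becomes a product of real powers of polynomials in one variable, gives
`Δ(x_N^a |x|^β) = a (a - 1) x_N^(a-2) |x|^β + β (2a + β + N - 2) x_N^a |x|^(β-2)`.
Since `a (a - 1) = -κ` the Hardy term cancels the first summand, and
`β (2a + β + N - 2) = ℓ_{q,N} - μ_κ`, so `-Δv - κ v / x_N² = -(ℓ_{q,N} - μ_κ) v / |x|²`,
with `ℓ_{q,N} - μ_κ > 0` exactly when `q < q_c`.
On the other hand `x_N ≤ |x|` and `β (q - 1) = -2 - a (q - 1)` give `v^(q-1) ≤ ε^(q-1) / |x|²`,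
so `v^q ≤ (ℓ_{q,N} - μ_κ) v / |x|²` as soon as `ε^(q-1) ≤ ℓ_{q,N} - μ_κ`.
-/

open Filter Topology

-- The derivative `f'` is carried as data, so that jets compose without ever computing `deriv`.
def HasSecondDerivAt (f f' : ℝ → ℝ) (f'' t₀ : ℝ) : Prop :=
  (∀ᶠ t in 𝓝 t₀, HasDerivAt f (f' t) t) ∧ HasDerivAt f' f'' t₀

namespace HasSecondDerivAt

variable {f f' g g' : ℝ → ℝ} {f'' g'' t₀ : ℝ}

theorem hasDerivAt (hf : HasSecondDerivAt f f' f'' t₀) : HasDerivAt f (f' t₀) t₀ :=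
  hf.1.self_of_nhds

theorem deriv_deriv (hf : HasSecondDerivAt f f' f'' t₀) : deriv (deriv f) t₀ = f'' := by
  have hderiv : deriv f =ᶠ[𝓝 t₀] f' := hf.1.mono fun _ ht => ht.deriv
  rw [hderiv.deriv_eq, hf.2.deriv]

theorem const_mul (c : ℝ) (hf : HasSecondDerivAt f f' f'' t₀) :
    HasSecondDerivAt (fun t => c * f t) (fun t => c * f' t) (c * f'') t₀ :=
  ⟨hf.1.mono fun _ ht => ht.const_mul c, hf.2.const_mul c⟩

theorem mul (hf : HasSecondDerivAt f f' f'' t₀) (hg : HasSecondDerivAt g g' g'' t₀) :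
    HasSecondDerivAt (fun t => f t * g t) (fun t => f' t * g t + f t * g' t)
      (f'' * g t₀ + 2 * f' t₀ * g' t₀ + f t₀ * g'') t₀ :=
  ⟨(hf.1.and hg.1).mono fun _ ht => ht.1.mul ht.2,
    ((hf.2.mul hg.hasDerivAt).add (hf.hasDerivAt.mul hg.2)).congr_deriv (by ring)⟩

theorem rpow_const (hf : HasSecondDerivAt f f' f'' t₀) (hpos : 0 < f t₀) (p : ℝ) :
    HasSecondDerivAt (fun t => f t ^ p) (fun t => f' t * p * f t ^ (p - 1))
      (p * (p - 1) * f t₀ ^ (p - 2) * f' t₀ ^ 2 + p * f t₀ ^ (p - 1) * f'') t₀ := by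
  have hpos_near : ∀ᶠ t in 𝓝 t₀, 0 < f t :=
    hf.hasDerivAt.continuousAt.eventually (lt_mem_nhds hpos)
  refine ⟨(hf.1.and hpos_near).mono fun _ ht => ht.1.rpow_const (Or.inl ht.2.ne'), ?_⟩
  have hpow := hf.hasDerivAt.rpow_const (p := p - 1) (Or.inl hpos.ne')
  rw [show p - 1 - 1 = p - 2 by ring] at hpow
  exact ((hf.2.mul_const p).mul hpow).congr_deriv (by ring)

end HasSecondDerivAt

theorem hasSecondDerivAt_affine (c δ t₀ : ℝ) :
    HasSecondDerivAt (fun t => c + δ * t) (fun _ => δ) 0 t₀ :=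
  ⟨Eventually.of_forall fun t => by simpa using ((hasDerivAt_id t).const_mul δ).const_add c,
    hasDerivAt_const t₀ δ⟩

theorem hasSecondDerivAt_quadratic (c b t₀ : ℝ) :
    HasSecondDerivAt (fun t => c + 2 * b * t + t ^ 2) (fun t => 2 * b + 2 * t) 2 t₀ := by
  refine ⟨Eventually.of_forall fun t => ?_, ?_⟩
  · exact ((((hasDerivAt_id t).const_mul (2 * b)).const_add c).add (hasDerivAt_pow 2 t)).congr_deriv
      (by simp)
  · simpa using ((hasDerivAt_id t₀).const_mul 2).const_add (2 * b)

theorem iteratedFDeriv_two_apply_self_eq_deriv_deriv {E : Type*} [NormedAddCommGroup E]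
    [NormedSpace ℝ E] {f : E → ℝ} {x : E} (hf : ContDiffAt ℝ 2 f x) (v : E) :
    iteratedFDeriv ℝ 2 f x ![v, v] = deriv (deriv fun t : ℝ => f (x + t • v)) 0 := by
  have hline : ∀ t : ℝ, HasDerivAt (fun s : ℝ => x + s • v) v t := fun t => by
    simpa using ((hasDerivAt_id t).smul_const v).const_add x
  have hline_tendsto : Tendsto (fun t : ℝ => x + t • v) (𝓝 0) (𝓝 x) := by
    simpa using (hline 0).continuousAt.tendsto
  have hdiff : ∀ᶠ t in 𝓝 (0 : ℝ), DifferentiableAt ℝ f (x + t • v) :=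
    hline_tendsto.eventually <| (hf.eventually (by simp)).mono fun _ hy =>
      hy.differentiableAt (by simp)
  have hf' : DifferentiableAt ℝ (fderiv ℝ f) x :=
    (hf.fderiv_right (m := 1) (by norm_num)).differentiableAt (by simp)
  have hsecond : HasSecondDerivAt (fun t => f (x + t • v)) (fun t => fderiv ℝ f (x + t • v) v)
      (fderiv ℝ (fderiv ℝ f) x v v) 0 := by
    refine ⟨hdiff.mono fun t ht => ht.hasFDerivAt.comp_hasDerivAt t (hline t), ?_⟩
    have := (hf'.hasFDerivAt.comp_hasDerivAt_of_eq 0 (hline 0) (by simp)).clm_apply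
      (hasDerivAt_const (0 : ℝ) v)
    simpa using this
  rw [hsecond.deriv_deriv, iteratedFDeriv_two_apply]
  simp

theorem sq_rpow_half {r : ℝ} (hr : 0 ≤ r) (s : ℝ) : (r ^ 2) ^ (s / 2) = r ^ s := by
  rw [← Real.rpow_natCast_mul hr]
  congr 1
  ring

section CoordNormPower

variable {N : ℕ} (i₀ : Fin N) (c a b : ℝ) {x : EuclideanSpace ℝ (Fin N)}

theorem contDiffAt_coord_rpow_mul_norm_rpow (hx : 0 < x i₀) :
    ContDiffAt ℝ 2 (fun y : EuclideanSpace ℝ (Fin N) => c * y i₀ ^ a * ‖y‖ ^ b) x := by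
  have hx0 : x ≠ 0 := by rintro rfl; simp at hx
  have hcoord : ContDiffAt ℝ 2 (fun y : EuclideanSpace ℝ (Fin N) => y i₀) x := by fun_prop
  exact (contDiffAt_const.mul (hcoord.rpow_const_of_ne hx.ne')).mul
    ((contDiffAt_norm ℝ hx0).rpow_const_of_ne (norm_ne_zero_iff.mpr hx0))

theorem coord_rpow_mul_norm_rpow_add_smul_single (i : Fin N) (t : ℝ) :
    c * (x + t • EuclideanSpace.single i (1 : ℝ)) i₀ ^ a
        * ‖x + t • EuclideanSpace.single i (1 : ℝ)‖ ^ b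
      = c * (x i₀ + (if i₀ = i then 1 else 0) * t) ^ a
        * (‖x‖ ^ 2 + 2 * x i * t + t ^ 2) ^ (b / 2) := by
  have hnorm_sq : ‖x + t • EuclideanSpace.single i (1 : ℝ)‖ ^ 2
      = ‖x‖ ^ 2 + 2 * x i * t + t ^ 2 := by
    rw [norm_add_sq_real, real_inner_smul_right, EuclideanSpace.inner_single_right, norm_smul,
      PiLp.norm_single]
    simp only [Real.norm_eq_abs, abs_one, mul_one, sq_abs, conj_trivial, one_mul]
    ring
  rw [← hnorm_sq, sq_rpow_half (norm_nonneg _)]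
  simp [mul_comm]

theorem iteratedFDeriv_two_coord_rpow_mul_norm_rpow (hx : 0 < x i₀) (i : Fin N) :
    iteratedFDeriv ℝ 2 (fun y : EuclideanSpace ℝ (Fin N) => c * y i₀ ^ a * ‖y‖ ^ b) x
        ![EuclideanSpace.single i 1, EuclideanSpace.single i 1]
      = c * (if i₀ = i then a * (a - 1) * x i₀ ^ (a - 2) * ‖x‖ ^ b
          + 2 * a * b * x i₀ ^ a * ‖x‖ ^ (b - 2) else 0)
        + c * b * x i₀ ^ a * ((b - 2) * ‖x‖ ^ (b - 4) * x i ^ 2 + ‖x‖ ^ (b - 2)) := by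
  have hx0 : x ≠ 0 := by rintro rfl; simp at hx
  have hjet := (((hasSecondDerivAt_affine (x i₀) (if i₀ = i then 1 else 0) 0).rpow_const
    (by simpa using hx) a).const_mul c).mul
      ((hasSecondDerivAt_quadratic (‖x‖ ^ 2) (x i) 0).rpow_const (by simp [hx0]) (b / 2))
  rw [iteratedFDeriv_two_apply_self_eq_deriv_deriv
    (contDiffAt_coord_rpow_mul_norm_rpow i₀ c a b hx)]
  simp only [coord_rpow_mul_norm_rpow_add_smul_single]
  rw [hjet.deriv_deriv]
  have hr : 0 ≤ ‖x‖ := norm_nonneg x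
  simp only [mul_zero, add_zero, zero_pow two_ne_zero, sq_rpow_half hr,
    show b / 2 - 1 = (b - 2) / 2 by ring, show b / 2 - 2 = (b - 4) / 2 by ring]
  split_ifs with h
  · subst h
    have hpow : x i₀ ^ (a - 1) * x i₀ = x i₀ ^ a := by
      rw [← Real.rpow_add_one hx.ne']; norm_num
    linear_combination (2 * a * b * c * ‖x‖ ^ (b - 2)) * hpow
  · ring

theorem laplacian_coord_rpow_mul_norm_rpow (hx : 0 < x i₀) :
    laplacian (fun y => c * y i₀ ^ a * ‖y‖ ^ b) x
      = c * (a * (a - 1) * x i₀ ^ (a - 2) * ‖x‖ ^ b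
        + b * (2 * a + b + N - 2) * x i₀ ^ a * ‖x‖ ^ (b - 2)) := by
  have hx0 : x ≠ 0 := by rintro rfl; simp at hx
  have hpow : ‖x‖ ^ (b - 4) * ‖x‖ ^ 2 = ‖x‖ ^ (b - 2) := by
    rw [← Real.rpow_natCast, ← Real.rpow_add (norm_pos_iff.mpr hx0)]; congr 1; ring
  simp only [laplacian, iteratedFDeriv_two_coord_rpow_mul_norm_rpow i₀ c a b hx,
    Finset.sum_add_distrib, ← Finset.mul_sum, Finset.sum_ite_eq, Finset.mem_univ, if_true,
    Finset.sum_const, Finset.card_univ, Fintype.card_fin, nsmul_eq_mul]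
  rw [← EuclideanSpace.real_norm_sq_eq]
  linear_combination c * b * (b - 2) * x i₀ ^ a * hpow

end CoordNormPower

-- `ell N q` is the paper's `ℓ_{q,N}`, and `mu N (α₊ / 2)` its `μ_κ`.
noncomputable def ell (N : ℕ) (q : ℝ) : ℝ := 2 / (q - 1) * (2 / (q - 1) + 2 - N)

def mu (N : ℕ) (a : ℝ) : ℝ := a * (N + a - 2)

theorem mu_lt_ell {N : ℕ} (hN : 2 ≤ N) {a q : ℝ} (ha : 0 < a) (hq : 1 < q)
    (hqc : q < ((N : ℝ) + a) / ((N : ℝ) - 2 + a)) : mu N a < ell N q := by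
  have hN' : (2 : ℝ) ≤ N := by exact_mod_cast hN
  have hq1 : 0 < q - 1 := by linarith
  have hm : (N : ℝ) - 2 + a < 2 / (q - 1) := by
    rw [lt_div_iff₀ hq1]
    nlinarith [(lt_div_iff₀ (by linarith : (0 : ℝ) < N - 2 + a)).mp hqc]
  have hfactor : ell N q - mu N a = (2 / (q - 1) + a) * (2 / (q - 1) - (N - 2 + a)) := by
    unfold ell mu; ring
  rw [← sub_pos, hfactor]
  exact mul_pos (by positivity) (by linarith)

theorem mul_rpow_mul_rpow_rpow_le_div_sq {ε s r a p : ℝ} (hε : 0 ≤ ε) (hs : 0 < s) (hsr : s ≤ r)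
    (ha : 0 ≤ a) (hp : 0 < p) :
    (ε * s ^ a * r ^ (-(2 / p + a))) ^ p ≤ ε ^ p / r ^ 2 := by
  have hr : 0 < r := hs.trans_le hsr
  have hexp : -(2 / p + a) * p = -(a * p) - 2 := by field_simp; ring
  rw [Real.mul_rpow (by positivity) (by positivity), Real.mul_rpow hε (by positivity),
    ← Real.rpow_mul hs.le, ← Real.rpow_mul hr.le, hexp, Real.rpow_sub hr, Real.rpow_two]
  calc ε ^ p * s ^ (a * p) * (r ^ (-(a * p)) / r ^ 2)
      ≤ ε ^ p * r ^ (a * p) * (r ^ (-(a * p)) / r ^ 2) := by gcongr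
    _ = ε ^ p / r ^ 2 := by
        rw [mul_assoc, ← mul_div_assoc, ← Real.rpow_add hr, add_neg_cancel, Real.rpow_zero,
          mul_one_div]

theorem half_mul_half_sub_one_eq_neg {κ α : ℝ} (hκ : κ ≤ 1 / 4)
    (hα : α = 1 + Real.sqrt (1 - 4 * κ)) : α / 2 * (α / 2 - 1) = -κ := by
  have hsq := Real.sq_sqrt (by linarith : (0 : ℝ) ≤ 1 - 4 * κ)
  rw [hα]
  linear_combination hsq / 4

/-- in the subcritical range `1 < q < q_c`, for small `ε > 0` the function
`v(x) = ε x_N^{α₊/2} |x|^{-2/(q-1) - α₊/2}` is a subsolution of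
`-Δv - κ v/x_N² + v^q = 0` in the half-space `{x_N > 0}`. -/
theorem stmt_8 {N : ℕ} (hN : 2 ≤ N)
    (κ α q : ℝ) (hκ1 : κ ≤ 1 / 4)
    (hα : α = 1 + Real.sqrt (1 - 4 * κ))
    (hq : 1 < q) (hqc : q < ((N : ℝ) + α / 2) / ((N : ℝ) - 2 + α / 2)) :
    ∃ ε₀ : ℝ, 0 < ε₀ ∧
      ∀ ε : ℝ, 0 < ε → ε ≤ ε₀ →
        ∀ x : EuclideanSpace ℝ (Fin N), 0 < x ⟨N - 1, by omega⟩ →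
          -laplacian
              (fun y => ε * (y ⟨N - 1, by omega⟩) ^ (α / 2)
                * ‖y‖ ^ (-(2 / (q - 1) + α / 2))) x
            - κ * (ε * (x ⟨N - 1, by omega⟩) ^ (α / 2)
                * ‖x‖ ^ (-(2 / (q - 1) + α / 2)))
                / (x ⟨N - 1, by omega⟩) ^ 2
            + (ε * (x ⟨N - 1, by omega⟩) ^ (α / 2)
                * ‖x‖ ^ (-(2 / (q - 1) + α / 2))) ^ q ≤ 0 := by
  have hroot := half_mul_half_sub_one_eq_neg hκ1 hα
  have ha : 0 < α / 2 := by rw [hα]; positivity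
  set a := α / 2
  set K := ell N q - mu N a
  have hK : 0 < K := sub_pos.mpr (mu_lt_ell hN ha hq hqc)
  have hq1 : 0 < q - 1 := by linarith
  refine ⟨K ^ (1 / (q - 1)), by positivity, fun ε hε hεε₀ x hs => ?_⟩
  have hεK : ε ^ (q - 1) ≤ K := by
    calc ε ^ (q - 1) ≤ (K ^ (1 / (q - 1))) ^ (q - 1) := by gcongr
      _ = K := by rw [← Real.rpow_mul hK.le, one_div_mul_cancel hq1.ne', Real.rpow_one]
  rw [laplacian_coord_rpow_mul_norm_rpow _ ε a _ hs]
  set s := x ⟨N - 1, by omega⟩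
  set r := ‖x‖
  set β := -(2 / (q - 1) + a)
  set v := ε * s ^ a * r ^ β
  have hsr : s ≤ r := (le_abs_self s).trans (PiLp.norm_apply_le x _)
  have hr : 0 < r := hs.trans_le hsr
  have hv : 0 < v := by positivity
  have hlinear : -(ε * (a * (a - 1) * s ^ (a - 2) * r ^ β
      + β * (2 * a + β + N - 2) * s ^ a * r ^ (β - 2))) - κ * v / s ^ 2 = -(K * v / r ^ 2) := by
    rw [Real.rpow_sub hs, Real.rpow_sub hr, Real.rpow_two, Real.rpow_two, hroot]
    unfold K ell mu v β
    field_simp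
    ring
  have hpower : v ^ q ≤ K * v / r ^ 2 :=
    calc v ^ q = v * v ^ (q - 1) := by
          rw [← Real.rpow_one_add' hv.le (by linarith), add_sub_cancel]
      _ ≤ v * (ε ^ (q - 1) / r ^ 2) := by
          gcongr; exact mul_rpow_mul_rpow_rpow_le_div_sq hε.le hs hsr ha.le hq1
      _ ≤ v * (K / r ^ 2) := by gcongr
      _ = K * v / r ^ 2 := by ring
  linarith
end
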